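/- If T is a tree with radius r on n vertices, then ε(T) = ε(L(T)) + n + r − 1, where L(T) is the line graph of T. -/

import Mathlib

open Finset

/-- The Wiener index: sum of distances over unordered pairs of vertices. -/
noncomputable def wiener {V : Type*} [Fintype V] (G : SimpleGraph V) : ℕ :=
  (∑ u : V, ∑ v : V, G.dist u v) / 2

/-- The eccentricity of a vertex. -/
noncomputable def eccVert {V : Type*} [Fintype V] (G : SimpleGraph V) (v : V) : ℕ :=
  univ.sup (G.dist v)

/-- The eccentricity (total eccentricity) of a graph. -/
noncomputable def eccSum {V : Type*} [Fintype V] (G : SimpleGraph V) : ℕ :=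
  ∑ v : V, eccVert G v

/-- The radius of a graph: the minimum eccentricity. -/
noncomputable def graphRad {V : Type*} [Fintype V] [Nonempty V]
    (G : SimpleGraph V) : ℕ :=
  univ.inf' univ_nonempty (eccVert G)

/-! In a tree the distance in `L(T)` between two edges is one less than the largest distance
between their endpoints, hence `ecc_{L(T)}(uv) + 1 = max (ecc u) (ecc v)`. Root the tree at a
centre `c`. The neighbour `p v` of `v ≠ c` towards `c` is never more eccentric than `v`, so
`v ↦ v (p v)` is a bijection from `V \ {c}` onto the edges with `ecc v = ecc_{L(T)}(v (p v)) + 1`.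
Summing gives `ε(T) - r = ε(L(T)) + (n - 1)`. -/

namespace SimpleGraph

variable {V : Type*} {G : SimpleGraph V} {a b m u v w x y z c : V}

lemma Walk.dist_add_dist_of_mem_support (p : G.Walk a b) (hp : p.length = G.dist a b)
    (hm : m ∈ p.support) : G.dist a m + G.dist m b = G.dist a b := by
  classical
  refine le_antisymm ?_ ((p.takeUntil m hm).reachable.dist_triangle_left b)
  calc G.dist a m + G.dist m b ≤ (p.takeUntil m hm).length + (p.dropUntil m hm).length :=
        add_le_add (dist_le _) (dist_le _)
    _ = G.dist a b := by rw [← Walk.length_append, Walk.take_spec, hp]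

lemma IsAcyclic.mem_edges_of_adj (hG : G.IsAcyclic) (huv : G.Adj u v) (p : G.Walk u v) :
    s(u, v) ∈ p.edges :=
  isBridge_iff_forall_walk_mem_edges.mp (isAcyclic_iff_forall_adj_isBridge.mp hG huv) p

lemma dist_le_one_of_mem_edge {e : Sym2 V} (he : e ∈ G.edgeSet) (ha : a ∈ e) (hb : b ∈ e) :
    G.dist a b ≤ 1 := by
  by_cases hab : a = b
  · simp [hab]
  · rw [(Sym2.mem_and_mem_iff hab).mp ⟨ha, hb⟩, mem_edgeSet] at he
    exact (dist_eq_one_iff_adj.mpr he).le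

lemma dist_le_eccVert [Fintype V] (v w : V) : G.dist v w ≤ eccVert G v :=
  Finset.le_sup (mem_univ w)

section LineGraph

variable {e f : G.edgeSet}

lemma Walk.exists_lineGraph_walk_length_le (W : G.Walk a b) :
    ∀ {e f : G.edgeSet}, a ∈ (e : Sym2 V) → b ∈ (f : Sym2 V) →
      ∃ Ω : G.lineGraph.Walk e f, Ω.length ≤ W.length + 1 := by
  induction W with
  | nil =>
    intro e f he hf
    by_cases hef : e = f
    · subst hef
      exact ⟨Walk.nil, by simp⟩
    · exact ⟨Walk.cons (lineGraph_adj_iff_exists.mpr ⟨hef, _, he, hf⟩) Walk.nil, by simp⟩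
  | @cons a c b hac W ih =>
    intro e f he hf
    let g : G.edgeSet := ⟨s(a, c), G.mem_edgeSet.mpr hac⟩
    obtain ⟨Ω, hΩ⟩ := ih (e := g) (Sym2.mem_mk_right a c) hf
    by_cases heg : e = g
    · subst heg
      exact ⟨Ω, by rw [Walk.length_cons]; omega⟩
    · refine ⟨Walk.cons (lineGraph_adj_iff_exists.mpr ⟨heg, a, he, Sym2.mem_mk_left a c⟩) Ω, ?_⟩
      rw [Walk.length_cons, Walk.length_cons]
      omega

lemma Connected.lineGraph_dist_le (hG : G.Connected) (ha : a ∈ (e : Sym2 V))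
    (hb : b ∈ (f : Sym2 V)) : G.lineGraph.dist e f ≤ G.dist a b + 1 := by
  obtain ⟨W, hW⟩ := hG.exists_walk_length_eq_dist a b
  obtain ⟨Ω, hΩ⟩ := W.exists_lineGraph_walk_length_le ha hb
  exact (dist_le Ω).trans (hW ▸ hΩ)

lemma Connected.dist_le_of_lineGraph_walk (hG : G.Connected) (Ω : G.lineGraph.Walk e f) :
    ∀ {a b : V}, a ∈ (e : Sym2 V) → b ∈ (f : Sym2 V) → G.dist a b ≤ Ω.length + 1 := by
  induction Ω with
  | nil =>
    intro a b ha hb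
    exact (dist_le_one_of_mem_edge (Subtype.prop _) ha hb).trans (by simp)
  | @cons e g f heg Ω ih =>
    intro a b ha hb
    obtain ⟨-, s, hse, hsg⟩ := lineGraph_adj_iff_exists.mp heg
    have has := dist_le_one_of_mem_edge e.2 ha hse
    have hsb := ih hsg hb
    have := hG.dist_triangle (u := a) (v := s) (w := b)
    rw [Walk.length_cons]
    omega

lemma Connected.dist_le_lineGraph_dist (hG : G.Connected) (ha : a ∈ (e : Sym2 V))
    (hb : b ∈ (f : Sym2 V)) : G.dist a b ≤ G.lineGraph.dist e f + 1 := by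
  obtain ⟨Ω, -⟩ := (hG.preconnected a b).some.exists_lineGraph_walk_length_le ha hb
  obtain ⟨Ω', hΩ'⟩ := Ω.reachable.exists_walk_length_eq_dist
  exact hΩ' ▸ hG.dist_le_of_lineGraph_walk Ω' ha hb

end LineGraph

section Tree

variable {T : SimpleGraph V}

lemma IsTree.dist_eq_add_one_or (hT : T.IsTree) (huv : T.Adj u v) (w : V) :
    T.dist u w = T.dist v w + 1 ∨ T.dist v w = T.dist u w + 1 := by
  obtain ⟨p, hp⟩ := hT.connected.exists_walk_length_eq_dist u w
  obtain ⟨q, hq⟩ := hT.connected.exists_walk_length_eq_dist w v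
  have hedge := hT.isAcyclic.mem_edges_of_adj huv (p.append q)
  rw [Walk.edges_append, List.mem_append] at hedge
  have huv' : T.dist u v = 1 := dist_eq_one_iff_adj.mpr huv
  rcases hedge with hp' | hq'
  · have := p.dist_add_dist_of_mem_support hp (p.snd_mem_support_of_mem_edges hp')
    omega
  · have := q.dist_add_dist_of_mem_support hq (q.fst_mem_support_of_mem_edges hq')
    rw [dist_comm (u := w), dist_comm (u := w)] at this
    omega

/-- The edge `uv` is a bridge, so a geodesic from `w` to `z` must cross it. -/
lemma IsTree.dist_add_one_add_dist_le (hT : T.IsTree) (huv : T.Adj u v)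
    (hw : T.dist u w < T.dist v w) (hz : T.dist v z < T.dist u z) :
    T.dist w u + 1 + T.dist v z ≤ T.dist w z := by
  obtain ⟨p, hp⟩ := hT.connected.exists_walk_length_eq_dist u w
  obtain ⟨q, hq⟩ := hT.connected.exists_walk_length_eq_dist w z
  obtain ⟨r, hr⟩ := hT.connected.exists_walk_length_eq_dist z v
  have hedge := hT.isAcyclic.mem_edges_of_adj huv (p.append (q.append r))
  simp only [Walk.edges_append, List.mem_append] at hedge
  have huv' : T.dist u v = 1 := dist_eq_one_iff_adj.mpr huv
  rcases hedge with hp' | hq' | hr'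
  · have := p.dist_add_dist_of_mem_support hp (p.snd_mem_support_of_mem_edges hp')
    omega
  · have := q.dist_add_dist_of_mem_support hq (q.fst_mem_support_of_mem_edges hq')
    omega
  · have := r.dist_add_dist_of_mem_support hr (r.fst_mem_support_of_mem_edges hr')
    rw [dist_comm (u := v) (v := z), dist_comm (u := u) (v := z)] at hz
    omega

lemma IsTree.eq_of_adj_of_dist_lt (hT : T.IsTree) (huv : T.Adj u v) (hxy : T.Adj x y)
    (hx : T.dist u x < T.dist v x) (hy : T.dist v y < T.dist u y) : s(u, v) = s(x, y) := by
  have hsep := hT.dist_add_one_add_dist_le huv hx hy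
  have hxy' : T.dist x y = 1 := dist_eq_one_iff_adj.mpr hxy
  obtain rfl : x = u := (hT.connected.dist_eq_zero_iff).mp (by omega)
  obtain rfl : v = y := (hT.connected.dist_eq_zero_iff).mp (by omega)
  rfl

lemma IsTree.exists_adj_dist_lt_eccVert_le [Fintype V] (hT : T.IsTree)
    (hc : ∀ u, eccVert T c ≤ eccVert T u) (hv : v ≠ c) :
    ∃ p, T.Adj v p ∧ T.dist p c < T.dist v c ∧ eccVert T p ≤ eccVert T v := by
  obtain ⟨q, hq⟩ := hT.connected.exists_walk_length_eq_dist v c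
  cases q with
  | nil => exact absurd rfl hv
  | @cons _ p _ hvp q =>
    have hpc : T.dist p c < T.dist v c := by
      have := dist_le q
      rw [Walk.length_cons] at hq
      omega
    refine ⟨p, hvp, hpc, Finset.sup_le fun w _ => ?_⟩
    rcases hT.dist_eq_add_one_or hvp w with h | h
    · have := dist_le_eccVert (G := T) v w
      omega
    · have hsep := hT.dist_add_one_add_dist_le hvp (by omega : T.dist v w < T.dist p w) hpc
      rw [dist_comm (u := w) (v := v), dist_comm (u := w)] at hsep
      calc T.dist p w ≤ T.dist c w := by omega
        _ ≤ eccVert T c := dist_le_eccVert c w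
        _ ≤ eccVert T v := hc v

lemma IsTree.exists_dist_add_two_le_of_dist_lt [Fintype V] (hT : T.IsTree) (huv : T.Adj u v)
    (hxy : T.Adj x y) (hne : s(u, v) ≠ s(x, y)) (hx : T.dist u x < T.dist v x) :
    ∃ b ∈ s(x, y), T.dist u b + 2 ≤ eccVert T v := by
  have hy : T.dist u y < T.dist v y := by
    rcases hT.dist_eq_add_one_or huv y with h | h
    · exact absurd (hT.eq_of_adj_of_dist_lt huv hxy hx (by omega)) hne
    · omega
  rcases hT.dist_eq_add_one_or hxy u with h | h
  · refine ⟨y, Sym2.mem_mk_right x y, ?_⟩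
    have := dist_le_eccVert (G := T) v x
    rw [dist_comm (u := x), dist_comm (u := y)] at h
    omega
  · refine ⟨x, Sym2.mem_mk_left x y, ?_⟩
    have := dist_le_eccVert (G := T) v y
    rw [dist_comm (u := x), dist_comm (u := y)] at h
    omega

lemma IsTree.exists_dist_add_two_le_max [Fintype V] (hT : T.IsTree) (huv : T.Adj u v)
    (hxy : T.Adj x y) (hne : s(u, v) ≠ s(x, y)) :
    ∃ a ∈ s(u, v), ∃ b ∈ s(x, y), T.dist a b + 2 ≤ max (eccVert T u) (eccVert T v) := by
  rcases hT.dist_eq_add_one_or huv x with h | h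
  · obtain ⟨b, hb, hvb⟩ := hT.exists_dist_add_two_le_of_dist_lt huv.symm hxy
      (by rwa [Sym2.eq_swap]) (by omega)
    exact ⟨v, Sym2.mem_mk_right u v, b, hb, hvb.trans (le_max_left _ _)⟩
  · obtain ⟨b, hb, hub⟩ := hT.exists_dist_add_two_le_of_dist_lt huv hxy hne (by omega)
    exact ⟨u, Sym2.mem_mk_left u v, b, hb, hub.trans (le_max_right _ _)⟩

theorem IsTree.eccVert_lineGraph_add_one [Fintype V] [Fintype T.edgeSet] (hT : T.IsTree)
    (huv : T.Adj u v) :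
    eccVert T.lineGraph ⟨s(u, v), huv⟩ + 1 = max (eccVert T u) (eccVert T v) := by
  set e : T.edgeSet := ⟨s(u, v), huv⟩
  have hmax : 1 ≤ max (eccVert T u) (eccVert T v) :=
    le_max_of_le_left ((dist_eq_one_iff_adj.mpr huv).symm.le.trans (dist_le_eccVert u v))
  have hecc_le : ∀ a ∈ (e : Sym2 V), eccVert T a ≤ eccVert T.lineGraph e + 1 := by
    intro a ha
    have : Nontrivial V := nontrivial_of_ne u v huv.ne
    refine Finset.sup_le fun w _ => ?_
    obtain ⟨w', hww'⟩ := hT.connected.preconnected.exists_adj_of_nontrivial w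
    calc T.dist a w ≤ T.lineGraph.dist e ⟨s(w, w'), hww'⟩ + 1 :=
          hT.connected.dist_le_lineGraph_dist ha (Sym2.mem_mk_left w w')
      _ ≤ eccVert T.lineGraph e + 1 := Nat.add_le_add_right (dist_le_eccVert _ _) 1
  refine le_antisymm ?_ (max_le (hecc_le u (Sym2.mem_mk_left u v))
    (hecc_le v (Sym2.mem_mk_right u v)))
  suffices eccVert T.lineGraph e ≤ max (eccVert T u) (eccVert T v) - 1 by omega
  refine Finset.sup_le fun ⟨f, hf⟩ _ => ?_
  induction f using Sym2.ind with | _ x y => ?_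
  by_cases hef : e = ⟨s(x, y), hf⟩
  · rw [← hef, dist_self]
    exact Nat.zero_le _
  · obtain ⟨a, ha, b, hb, hab⟩ := hT.exists_dist_add_two_le_max huv (T.mem_edgeSet.mp hf)
      fun h => hef (Subtype.ext h)
    have := hT.connected.lineGraph_dist_le (e := e) (f := ⟨s(x, y), hf⟩) ha hb
    omega

lemma IsTree.sum_eccVert_subtype_ne [Fintype V] [DecidableEq V] [Fintype T.edgeSet]
    (hT : T.IsTree) (hc : ∀ u, eccVert T c ≤ eccVert T u) :
    ∑ v : {v // v ≠ c}, eccVert T v = ∑ e : T.edgeSet, (eccVert T.lineGraph e + 1) := by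
  choose p hadj hdist hecc using fun v : {v // v ≠ c} => hT.exists_adj_dist_lt_eccVert_le hc v.2
  let toEdge : {v // v ≠ c} → T.edgeSet := fun v => ⟨s(v, p v), hadj v⟩
  have hinj : toEdge.Injective := by
    intro v w hvw
    rcases Sym2.eq_iff.mp (congrArg Subtype.val hvw) with ⟨h, -⟩ | ⟨h₁, h₂⟩
    · exact Subtype.ext h
    · have hv := hdist v
      have hw := hdist w
      rw [h₂] at hv
      rw [← h₁] at hw
      omega
  have hcard : Fintype.card {v // v ≠ c} = Fintype.card T.edgeSet := by
    have := hT.card_edgeFinset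
    rw [edgeFinset_card] at this
    rw [Fintype.card_subtype_compl, Fintype.card_subtype_eq]
    omega
  refine Fintype.sum_bijective toEdge
    ((Fintype.bijective_iff_injective_and_card _).mpr ⟨hinj, hcard⟩) _ _ fun v => ?_
  rw [hT.eccVert_lineGraph_add_one, max_eq_left (hecc v)]

lemma IsTree.eccSum_add_one [Fintype V] [DecidableEq V] [Fintype T.edgeSet] (hT : T.IsTree)
    (hc : ∀ u, eccVert T c ≤ eccVert T u) :
    eccSum T + 1 = eccSum T.lineGraph + Fintype.card V + eccVert T c := by
  have hsplit : eccSum T = eccVert T c + ∑ v : {v // v ≠ c}, eccVert T v :=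
    Fintype.sum_eq_add_sum_subtype_ne _ c
  have hedges := hT.card_edgeFinset
  rw [edgeFinset_card] at hedges
  rw [hsplit, hT.sum_eccVert_subtype_ne hc, Finset.sum_add_distrib, Finset.sum_const,
    Finset.card_univ, smul_eq_mul, mul_one, eccSum]
  omega

end Tree
end SimpleGraph

theorem stmt_14_general {V : Type*} [Fintype V] [Nonempty V] [DecidableEq V]
    (T : SimpleGraph V) [DecidableRel T.Adj] (hT : T.IsTree) :
    (eccSum T : ℤ) = eccSum T.lineGraph + Fintype.card V + graphRad T - 1 := by
  obtain ⟨c, -, hrad⟩ := exists_mem_eq_inf' univ_nonempty (eccVert T)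
  have hc : ∀ u, eccVert T c ≤ eccVert T u := fun u => hrad ▸ inf'_le _ (mem_univ u)
  have := hT.eccSum_add_one hc
  rw [graphRad, hrad]
  omega

theorem stmt_14 {V : Type*} [Fintype V] [Nonempty V] [DecidableEq V]
    (T : SimpleGraph V) [DecidableRel T.Adj] (hT : T.IsTree)
    (hn : 2 ≤ Fintype.card V) :
    (eccSum T : ℤ) = eccSum T.lineGraph + Fintype.card V + graphRad T - 1 :=
  stmt_14_general T hT
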